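/- Let (P_n) be a sequence of probability measures on the path space Ω₀ of continuous paths [0,1] → M ⊔ {∂}, all supported on C([0,1], M), converging locally weakly (i.e. the stopped-at-radius-R pushforwards converge weakly for all R) to a probability measure P supported on C([0,1], M) with P(∂C_R) = 0 for all R > 0, where C_R is the set of paths staying in the open geodesic ball B_R. Then P_n converges weakly to P on C([0,1], M). -/
import Mathlib

open Filter Set MeasureTheory BoundedContinuousFunction

section Stmt11Aux

variable {M : Type*} [MetricSpace M]

/-- A cutoff function on path space: `0` on paths within distance `R-1` of the constant
path `x₀`, and `1` on paths at distance `≥ R`. -/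
noncomputable def stmt11cut (x₀ : M) (R : ℝ) : C(Set.Icc (0:ℝ) 1, M) →ᵇ ℝ :=
  BoundedContinuousFunction.mkOfBound
    ⟨fun γ => min 1 (max 0 (dist γ (ContinuousMap.const _ x₀) - (R - 1))), by fun_prop⟩ 1
    (by
      intro γ γ'
      have h1 : min 1 (max 0 (dist γ (ContinuousMap.const _ x₀) - (R - 1))) ≤ 1 :=
        min_le_left _ _
      have h2 : min 1 (max 0 (dist γ' (ContinuousMap.const _ x₀) - (R - 1))) ≤ 1 :=
        min_le_left _ _
      have h3 : (0:ℝ) ≤ min 1 (max 0 (dist γ (ContinuousMap.const _ x₀) - (R - 1))) :=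
        le_min zero_le_one (le_max_left _ _)
      have h4 : (0:ℝ) ≤ min 1 (max 0 (dist γ' (ContinuousMap.const _ x₀) - (R - 1))) :=
        le_min zero_le_one (le_max_left _ _)
      rw [Real.dist_eq, abs_sub_le_iff]
      constructor <;> simp only [ContinuousMap.coe_mk] <;> linarith)

lemma stmt11cut_apply (x₀ : M) (R : ℝ) (γ : C(Set.Icc (0:ℝ) 1, M)) :
    stmt11cut x₀ R γ = min 1 (max 0 (dist γ (ContinuousMap.const _ x₀) - (R - 1))) := rfl

lemma stmt11cut_nonneg (x₀ : M) (R : ℝ) (γ : C(Set.Icc (0:ℝ) 1, M)) :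
    0 ≤ stmt11cut x₀ R γ := by
  rw [stmt11cut_apply]; exact le_min zero_le_one (le_max_left _ _)

lemma stmt11cut_le_one (x₀ : M) (R : ℝ) (γ : C(Set.Icc (0:ℝ) 1, M)) :
    stmt11cut x₀ R γ ≤ 1 := by
  rw [stmt11cut_apply]; exact min_le_left _ _

lemma stmt11cut_eq_one (x₀ : M) (R : ℝ) (γ : C(Set.Icc (0:ℝ) 1, M))
    (h : R ≤ dist γ (ContinuousMap.const _ x₀)) : stmt11cut x₀ R γ = 1 := by
  rw [stmt11cut_apply]
  have : (1:ℝ) ≤ max 0 (dist γ (ContinuousMap.const _ x₀) - (R - 1)) :=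
    le_max_of_le_right (by linarith)
  exact min_eq_left this

lemma stmt11cut_eq_zero (x₀ : M) (R : ℝ) (γ : C(Set.Icc (0:ℝ) 1, M))
    (h : dist γ (ContinuousMap.const _ x₀) ≤ R - 1) : stmt11cut x₀ R γ = 0 := by
  rw [stmt11cut_apply]
  rw [max_eq_left (by linarith)]
  exact min_eq_right zero_le_one

lemma stmt11_integrable_of_bound {α : Type*} [MeasurableSpace α] (μ : Measure α)
    [IsFiniteMeasure μ] (f : α → ℝ) (hf : Measurable f) (C : ℝ) (h : ∀ x, |f x| ≤ C) :
    Integrable f μ :=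
  (integrable_const C).mono' hf.aestronglyMeasurable
    (Filter.Eventually.of_forall fun x => by simpa [Real.norm_eq_abs] using h x)

end Stmt11Aux

/-- From local weak convergence to weak convergence on path space.  `C_R` is the set of
paths staying in the open ball `B(x₀,R)`; `T R` is the map stopping a path at its first
exit from `B(x₀,R)` (characterized here by: it fixes paths of `C_R`, and only they are
mapped into `C_R`).  If `Pₙ ∘ (T R)⁻¹ → P ∘ (T R)⁻¹` weakly for every `R > 0` and
`P(∂C_R) = 0` for every `R > 0`, then `Pₙ → P` weakly. -/
theorem stmt11 {M : Type*} [MetricSpace M] (x₀ : M)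
    [MeasurableSpace C(Set.Icc (0:ℝ) 1, M)] [OpensMeasurableSpace C(Set.Icc (0:ℝ) 1, M)]
    (P : ℕ → Measure C(Set.Icc (0:ℝ) 1, M)) (Plim : Measure C(Set.Icc (0:ℝ) 1, M))
    [∀ n, IsProbabilityMeasure (P n)] [IsProbabilityMeasure Plim]
    (T : ℝ → C(Set.Icc (0:ℝ) 1, M) → C(Set.Icc (0:ℝ) 1, M))
    (hTmeas : ∀ R, 0 < R → Measurable (T R))
    (hTfix : ∀ R, 0 < R → ∀ γ : C(Set.Icc (0:ℝ) 1, M),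
      (∀ t, dist (γ t) x₀ < R) → T R γ = γ)
    (hTin : ∀ R, 0 < R → ∀ γ : C(Set.Icc (0:ℝ) 1, M),
      (∀ t, dist (T R γ t) x₀ < R) → ∀ t, dist (γ t) x₀ < R)
    (hconv : ∀ R, 0 < R → ∀ F : C(Set.Icc (0:ℝ) 1, M) →ᵇ ℝ,
      Tendsto (fun n => ∫ γ, F (T R γ) ∂(P n)) atTop (nhds (∫ γ, F (T R γ) ∂Plim)))
    (hfrontier : ∀ R, 0 < R →
      Plim (frontier {γ : C(Set.Icc (0:ℝ) 1, M) | ∀ t, dist (γ t) x₀ < R}) = 0) :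
    ∀ F : C(Set.Icc (0:ℝ) 1, M) →ᵇ ℝ,
      Tendsto (fun n => ∫ γ, F γ ∂(P n)) atTop (nhds (∫ γ, F γ ∂Plim)) := by
  intro F
  set c : C(Set.Icc (0:ℝ) 1, M) := ContinuousMap.const _ x₀ with hc
  have hdistpt : ∀ (γ : C(Set.Icc (0:ℝ) 1, M)) (t : Set.Icc (0:ℝ) 1),
      dist (γ t) x₀ ≤ dist γ c := fun γ t => by
    simpa [hc] using ContinuousMap.dist_apply_le_dist (f := γ) (g := c) t
  rw [Metric.tendsto_atTop]
  intro ε hε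
  have hFn : (0:ℝ) ≤ ‖F‖ := norm_nonneg F
  set δ : ℝ := ε / (6 * ‖F‖ + 2) with hδ
  have hδpos : 0 < δ := div_pos hε (by linarith)
  have hδε : δ * (6 * ‖F‖ + 2) = ε := div_mul_cancel₀ ε (by linarith)
  -- measurability and integrability helpers
  have hmeasT : ∀ (R : ℝ), 0 < R → ∀ (G : C(Set.Icc (0:ℝ) 1, M) →ᵇ ℝ),
      Measurable (fun γ => G (T R γ)) := fun R hR G =>
    G.continuous.measurable.comp (hTmeas R hR)
  -- the integral of the cutoff under Plim tends to 0 as the radius grows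
  have hI0 : Tendsto (fun m : ℕ => ∫ γ, stmt11cut x₀ ((m:ℝ)+2) (T ((m:ℝ)+2) γ) ∂Plim)
      atTop (nhds (∫ _γ, (0:ℝ) ∂Plim)) := by
    apply tendsto_integral_of_dominated_convergence (fun _ => (1:ℝ))
    · intro m
      exact (hmeasT _ (by positivity) _).aestronglyMeasurable
    · exact integrable_const 1
    · intro m
      refine Filter.Eventually.of_forall fun γ => ?_
      rw [Real.norm_eq_abs, abs_of_nonneg (stmt11cut_nonneg _ _ _)]
      exact stmt11cut_le_one _ _ _
    · refine Filter.Eventually.of_forall fun γ => ?_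
      obtain ⟨N, hN⟩ := exists_nat_ge (dist γ c)
      refine tendsto_const_nhds.congr' ?_
      filter_upwards [eventually_ge_atTop N] with m hm
      have h1 : dist γ c ≤ (m:ℝ) := hN.trans (by exact_mod_cast hm)
      have hfix : T ((m:ℝ)+2) γ = γ := by
        refine hTfix _ (by positivity) γ fun t => (hdistpt γ t).trans_lt (by linarith)
      rw [hfix]
      exact (stmt11cut_eq_zero _ _ _ (by linarith)).symm
  rw [integral_const, smul_zero] at hI0
  rw [Metric.tendsto_atTop] at hI0
  obtain ⟨m, hm⟩ := hI0 δ hδpos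
  have hmδ := hm m le_rfl
  rw [Real.dist_eq, sub_zero] at hmδ
  set R : ℝ := (m:ℝ) + 2 with hRdef
  have hR : 0 < R := by positivity
  set I : ℝ := ∫ γ, stmt11cut x₀ R (T R γ) ∂Plim with hIdef
  have hIlt : I < δ := (le_abs_self _).trans_lt hmδ
  have hInn : 0 ≤ I := integral_nonneg fun γ => stmt11cut_nonneg _ _ _
  -- the key pointwise bound
  have hkey : ∀ γ, |F γ - F (T R γ)| ≤ 2 * ‖F‖ * stmt11cut x₀ R (T R γ) := by
    intro γ
    by_cases h : ∀ t, dist (γ t) x₀ < R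
    · rw [hTfix R hR γ h, sub_self, abs_zero]
      exact mul_nonneg (by positivity) (stmt11cut_nonneg _ _ _)
    · have h2 : ¬ ∀ t, dist (T R γ t) x₀ < R := fun h' => h (hTin R hR γ h')
      push_neg at h2
      obtain ⟨t, ht⟩ := h2
      have hone : stmt11cut x₀ R (T R γ) = 1 :=
        stmt11cut_eq_one _ _ _ (ht.trans (hdistpt _ t))
      rw [hone, mul_one]
      have h3 := F.norm_coe_le_norm γ
      have h4 := F.norm_coe_le_norm (T R γ)
      rw [Real.norm_eq_abs] at h3 h4
      have h3' := abs_le.1 h3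
      have h4' := abs_le.1 h4
      exact abs_le.2 ⟨by linarith [h3'.1, h4'.2], by linarith [h3'.2, h4'.1]⟩
  -- the integral comparison, for any probability measure
  have hterm : ∀ (μ : Measure C(Set.Icc (0:ℝ) 1, M)), IsProbabilityMeasure μ →
      |(∫ γ, F γ ∂μ) - ∫ γ, F (T R γ) ∂μ| ≤ 2 * ‖F‖ * ∫ γ, stmt11cut x₀ R (T R γ) ∂μ := by
    intro μ hμ
    have hiF : Integrable (fun γ => F γ) μ := F.integrable μ
    have hiFT : Integrable (fun γ => F (T R γ)) μ :=
      stmt11_integrable_of_bound μ _ (hmeasT R hR F) ‖F‖ fun γ => by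
        simpa [Real.norm_eq_abs] using F.norm_coe_le_norm (T R γ)
    have hig : Integrable (fun γ => stmt11cut x₀ R (T R γ)) μ :=
      stmt11_integrable_of_bound μ _ (hmeasT R hR _) 1 fun γ => by
        rw [abs_of_nonneg (stmt11cut_nonneg _ _ _)]; exact stmt11cut_le_one _ _ _
    rw [← integral_sub hiF hiFT]
    calc |∫ γ, (F γ - F (T R γ)) ∂μ| ≤ ∫ γ, |F γ - F (T R γ)| ∂μ := by
          simpa [Real.norm_eq_abs] using
            norm_integral_le_integral_norm (μ := μ) (fun γ => F γ - F (T R γ))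
      _ ≤ ∫ γ, 2 * ‖F‖ * stmt11cut x₀ R (T R γ) ∂μ :=
          integral_mono (hiF.sub hiFT).abs (hig.const_mul _) hkey
      _ = 2 * ‖F‖ * ∫ γ, stmt11cut x₀ R (T R γ) ∂μ := integral_const_mul _ _
  -- convergence of the stopped integrals
  have hA := hconv R hR F
  have hB := hconv R hR (stmt11cut x₀ R)
  rw [Metric.tendsto_atTop] at hA hB
  obtain ⟨N₁, hN₁⟩ := hA δ hδpos
  obtain ⟨N₂, hN₂⟩ := hB δ hδpos
  refine ⟨max N₁ N₂, fun n hn => ?_⟩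
  have h1 := hN₁ n (le_of_max_le_left hn)
  have h2 := hN₂ n (le_of_max_le_right hn)
  rw [Real.dist_eq] at h1 h2 ⊢
  have hGn : (∫ γ, stmt11cut x₀ R (T R γ) ∂(P n)) ≤ I + δ := by
    have := (abs_le.1 h2.le).2
    linarith
  have ht1 := hterm (P n) inferInstance
  have ht2 := hterm Plim inferInstance
  have htri : |(∫ γ, F γ ∂(P n)) - ∫ γ, F γ ∂Plim| ≤
      |(∫ γ, F γ ∂(P n)) - ∫ γ, F (T R γ) ∂(P n)| +
      |(∫ γ, F (T R γ) ∂(P n)) - ∫ γ, F (T R γ) ∂Plim| +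
      |(∫ γ, F (T R γ) ∂Plim) - ∫ γ, F γ ∂Plim| := by
    have a1 := abs_sub_le (∫ γ, F γ ∂(P n)) (∫ γ, F (T R γ) ∂(P n)) (∫ γ, F γ ∂Plim)
    have a2 := abs_sub_le (∫ γ, F (T R γ) ∂(P n)) (∫ γ, F (T R γ) ∂Plim) (∫ γ, F γ ∂Plim)
    linarith
  have ht2' : |(∫ γ, F (T R γ) ∂Plim) - ∫ γ, F γ ∂Plim| ≤ 2 * ‖F‖ * I := by
    rw [abs_sub_comm]; exact ht2
  have hmul1 : 2 * ‖F‖ * (∫ γ, stmt11cut x₀ R (T R γ) ∂(P n)) ≤ 2 * ‖F‖ * (I + δ) :=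
    mul_le_mul_of_nonneg_left hGn (by positivity)
  have hmul2 : 2 * ‖F‖ * I ≤ 2 * ‖F‖ * δ :=
    mul_le_mul_of_nonneg_left hIlt.le (by positivity)
  nlinarith [hδpos, hFn]
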